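/- Fix ℓ > 0 and an even integer m ≥ 2, and let g(x) = (x²/(2ℓ²)) exp(−x²/(2ℓ²)) with Fourier coefficients c_k(g) = ∫_{-1/2}^{1/2} g(x) e^{−2πikx} dx. Then Σ_{k=1}^{m/2} |c_k(g)| < 7/2. -/

import Mathlib

/-!
Put `c = 1/(2ℓ²)`, so that `g(x) = c x² e^{-cx²}`. Its Fourier coefficients satisfy two bounds:
trivially `|c_k(g)| ≤ ∫ g ≤ √(π/c)/2`, and, integrating by parts twice (the first boundary term
vanishes because `g` is even), `(2πk)² |c_k(g)| ≤ |g'(1/2) - g'(-1/2)| + ∫ |g''| ≤ 16 + 10c√(π/c)`.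
Both integrals are compared with the Gaussian integral over `ℝ` through an explicit antiderivative.
Using the first bound for `k ≤ K = ⌊√(c/π)⌋` and the second one together with
`∑_{k > K} k⁻² ≤ 2/(K+1)` for the remaining `k` gives `∑ |c_k(g)| < 1/2 + 8/π² + 5/π < 7/2`,
uniformly in `c`.
-/

open MeasureTheory Real

noncomputable section

/-- The `k`-th Fourier coefficient `c_k(g) = ∫_{-1/2}^{1/2} g(x) e^{−2πikx} dx`
of (the 1-periodic continuation of) a real-valued function `g` on `[-1/2,1/2]`. -/
def fourierCoeff1 (g : ℝ → ℝ) (k : ℤ) : ℂ :=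
  ∫ x in (-(1/2) : ℝ)..(1/2),
    ((g x : ℝ) : ℂ) * Complex.exp (-(2 * (π : ℂ) * Complex.I) * (k : ℂ) * (x : ℂ))

open Finset

theorem fourierCoeff1_eq_fourierCoeffOn (g : ℝ → ℝ) (k : ℤ) :
    fourierCoeff1 g k = fourierCoeffOn (by norm_num : -(1/2 : ℝ) < 1/2) (fun x ↦ (g x : ℂ)) k := by
  rw [fourierCoeffOn_eq_integral]
  simp only [fourierCoeff1, fourier_coe_apply, smul_eq_mul]
  norm_num
  refine intervalIntegral.integral_congr fun x _ ↦ ?_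
  ring_nf

theorem norm_fourier_apply {T : ℝ} (n : ℤ) (x : AddCircle T) : ‖fourier n x‖ = 1 :=
  Circle.norm_coe _

theorem norm_fourierCoeffOn_le {a b : ℝ} (hab : a < b) (f : ℝ → ℂ) (n : ℤ) :
    ‖fourierCoeffOn hab f n‖ ≤ (∫ x in a..b, ‖f x‖) / (b - a) := by
  rw [fourierCoeffOn_eq_integral, norm_smul, norm_div, norm_one,
    Real.norm_of_nonneg (sub_pos.2 hab).le, one_div_mul_eq_div]
  gcongr
  refine (intervalIntegral.norm_integral_le_integral_norm hab.le).trans_eq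
    (intervalIntegral.integral_congr fun x _ ↦ ?_)
  simp only [norm_smul, norm_fourier_apply, one_mul]

theorem norm_fourierCoeffOn_le_of_hasDerivAt {a b : ℝ} (hab : a < b) {f f' : ℝ → ℂ} {n : ℤ}
    (hn : n ≠ 0) (hf : ∀ x ∈ Set.uIcc a b, HasDerivAt f (f' x) x)
    (hf' : IntervalIntegrable f' volume a b) :
    ‖fourierCoeffOn hab f n‖ ≤
      (‖f b - f a‖ + (b - a) * ‖fourierCoeffOn hab f' n‖) / (2 * π * |n|) := by
  have hnorm : ‖-2 * (π : ℂ) * Complex.I * n‖ = 2 * π * |n| := by simp [abs_of_pos pi_pos]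
  rw [fourierCoeffOn_of_hasDerivAt hab hn hf hf', norm_mul, one_div, norm_inv, hnorm,
    inv_mul_eq_div]
  gcongr
  refine (norm_sub_le _ _).trans_eq ?_
  rw [norm_mul, norm_mul, norm_fourier_apply, one_mul, ← Complex.ofReal_sub, Complex.norm_real,
    Real.norm_of_nonneg (sub_pos.2 hab).le]

theorem norm_fourierCoeffOn_le_of_hasDerivAt_of_hasDerivAt {a b : ℝ} (hab : a < b)
    {f f' f'' : ℝ → ℂ} {n : ℤ} (hn : n ≠ 0) (hper : f a = f b)
    (hf : ∀ x ∈ Set.uIcc a b, HasDerivAt f (f' x) x)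
    (hf' : ∀ x ∈ Set.uIcc a b, HasDerivAt f' (f'' x) x)
    (hf'' : IntervalIntegrable f'' volume a b) :
    ‖fourierCoeffOn hab f n‖ ≤
      (b - a) * (‖f' b - f' a‖ + ∫ x in a..b, ‖f'' x‖) / (2 * π * |n|) ^ 2 := by
  have hT : 0 < b - a := sub_pos.2 hab
  have hf'_int : IntervalIntegrable f' volume a b :=
    ContinuousOn.intervalIntegrable fun x hx ↦ (hf' x hx).continuousAt.continuousWithinAt
  have hf_coeff := norm_fourierCoeffOn_le_of_hasDerivAt hab hn hf hf'_int
  have hf'_coeff := norm_fourierCoeffOn_le_of_hasDerivAt hab hn hf' hf''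
  have hf''_coeff : (b - a) * ‖fourierCoeffOn hab f'' n‖ ≤ ∫ x in a..b, ‖f'' x‖ := by
    rw [← le_div_iff₀' hT]; exact norm_fourierCoeffOn_le hab f'' n
  rw [hper, sub_self, norm_zero, zero_add] at hf_coeff
  calc ‖fourierCoeffOn hab f n‖ ≤ (b - a) * ‖fourierCoeffOn hab f' n‖ / (2 * π * |n|) := hf_coeff
    _ ≤ (b - a) * ((‖f' b - f' a‖ + ∫ x in a..b, ‖f'' x‖) / (2 * π * |n|)) / (2 * π * |n|) := by
      gcongr; exact hf'_coeff.trans (by gcongr)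
    _ = _ := by ring

theorem intervalIntegral_exp_neg_mul_sq_le {a b c : ℝ} (hab : a ≤ b) (hc : 0 < c) :
    ∫ x in a..b, exp (-(c * x ^ 2)) ≤ √(π / c) := by
  have hint : Integrable (fun x : ℝ ↦ exp (-(c * x ^ 2))) := by
    simpa [neg_mul] using integrable_exp_neg_mul_sq hc
  rw [intervalIntegral.integral_of_le hab]
  calc ∫ x in Set.Ioc a b, exp (-(c * x ^ 2)) ≤ ∫ x, exp (-(c * x ^ 2)) :=
        setIntegral_le_integral hint (.of_forall fun x ↦ (exp_pos _).le)
    _ = √(π / c) := by simpa [neg_mul] using integral_gaussian c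

theorem intervalIntegral_le_of_hasDerivAt_sub_gaussian {a b c lam : ℝ} {q F : ℝ → ℝ}
    (hab : a ≤ b) (hc : 0 < c) (hlam : 0 ≤ lam)
    (hF : ∀ x ∈ Set.uIcc a b, HasDerivAt F (q x - lam * exp (-(c * x ^ 2))) x)
    (hq : IntervalIntegrable q volume a b) (hFab : F b ≤ F a) :
    ∫ x in a..b, q x ≤ lam * √(π / c) := by
  have he : IntervalIntegrable (fun x ↦ lam * exp (-(c * x ^ 2))) volume a b :=
    (by fun_prop : Continuous fun x : ℝ ↦ lam * exp (-(c * x ^ 2))).intervalIntegrable a b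
  have hFTC := intervalIntegral.integral_eq_sub_of_hasDerivAt hF (hq.sub he)
  rw [intervalIntegral.integral_sub hq he, intervalIntegral.integral_const_mul] at hFTC
  have := intervalIntegral_exp_neg_mul_sq_le hab hc
  nlinarith

theorem hasDerivAt_exp_neg_mul_sq (c x : ℝ) :
    HasDerivAt (fun x ↦ exp (-(c * x ^ 2))) (-(2 * c * x) * exp (-(c * x ^ 2))) x :=
  ((hasDerivAt_pow 2 x).const_mul c).fun_neg.exp.congr_deriv (by norm_num; ring)

def quadGaussian (c x : ℝ) : ℝ := c * x ^ 2 * exp (-(c * x ^ 2))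

def quadGaussianDeriv (c x : ℝ) : ℝ := (2 * c * x - 2 * c ^ 2 * x ^ 3) * exp (-(c * x ^ 2))

def quadGaussianDeriv2 (c x : ℝ) : ℝ :=
  (2 * c - 10 * c ^ 2 * x ^ 2 + 4 * c ^ 3 * x ^ 4) * exp (-(c * x ^ 2))

theorem hasDerivAt_quadGaussian (c x : ℝ) :
    HasDerivAt (quadGaussian c) (quadGaussianDeriv c x) x :=
  (((hasDerivAt_pow 2 x).const_mul c).fun_mul (hasDerivAt_exp_neg_mul_sq c x)).congr_deriv
    (by norm_num [quadGaussianDeriv]; ring)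

theorem hasDerivAt_quadGaussianDeriv (c x : ℝ) :
    HasDerivAt (quadGaussianDeriv c) (quadGaussianDeriv2 c x) x :=
  ((((hasDerivAt_id' x).const_mul (2 * c)).fun_sub ((hasDerivAt_pow 3 x).const_mul
    (2 * c ^ 2))).fun_mul (hasDerivAt_exp_neg_mul_sq c x)).congr_deriv
    (by norm_num [quadGaussianDeriv2]; ring)

theorem intervalIntegral_quadGaussian_le {c : ℝ} (hc : 0 < c) :
    ∫ x in (-(1/2) : ℝ)..(1/2), quadGaussian c x ≤ √(π / c) / 2 := by
  rw [div_eq_inv_mul (√(π / c))]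
  refine intervalIntegral_le_of_hasDerivAt_sub_gaussian
    (F := fun x ↦ -(x / 2) * exp (-(c * x ^ 2))) (by norm_num) hc (by norm_num) (fun x _ ↦ ?_)
    ((by unfold quadGaussian; fun_prop : Continuous (quadGaussian c)).intervalIntegrable _ _) ?_
  · exact (((hasDerivAt_id' x).div_const 2).fun_neg.fun_mul
      (hasDerivAt_exp_neg_mul_sq c x)).congr_deriv (by simp only [quadGaussian]; ring)
  · norm_num; positivity

theorem intervalIntegral_abs_quadGaussianDeriv2_le {c : ℝ} (hc : 0 < c) :
    ∫ x in (-(1/2) : ℝ)..(1/2), |quadGaussianDeriv2 c x| ≤ 10 * c * √(π / c) := by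
  set P : ℝ → ℝ := fun x ↦ (2 * c + 10 * c ^ 2 * x ^ 2 + 4 * c ^ 3 * x ^ 4) * exp (-(c * x ^ 2))
  have hP : Continuous P := by fun_prop
  have habs (x : ℝ) : |quadGaussianDeriv2 c x| ≤ P x := by
    rw [quadGaussianDeriv2, abs_mul, abs_of_pos (exp_pos _)]
    refine mul_le_mul_of_nonneg_right (abs_le.2 ⟨?_, ?_⟩) (exp_pos _).le <;>
      nlinarith [sq_nonneg x, pow_pos hc 2, pow_pos hc 3, pow_two_nonneg (x ^ 2)]
  refine (intervalIntegral.integral_mono_on (by norm_num)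
    ((by unfold quadGaussianDeriv2; fun_prop : Continuous _).abs.intervalIntegrable _ _)
    (hP.intervalIntegrable _ _) fun x _ ↦ habs x).trans ?_
  refine intervalIntegral_le_of_hasDerivAt_sub_gaussian
    (F := fun x ↦ -(8 * c * x + 2 * c ^ 2 * x ^ 3) * exp (-(c * x ^ 2)))
    (by norm_num) hc (by positivity) (fun x _ ↦ ?_) (hP.intervalIntegrable _ _) ?_
  · exact ((((hasDerivAt_id' x).const_mul (8 * c)).fun_add ((hasDerivAt_pow 3 x).const_mul
      (2 * c ^ 2))).fun_neg.fun_mul (hasDerivAt_exp_neg_mul_sq c x)).congr_deriv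
      (by norm_num [P]; ring)
  · norm_num
    exact mul_le_mul_of_nonneg_right (by nlinarith) (exp_pos _).le

theorem abs_quadGaussianDeriv_sub_le {c : ℝ} (hc : 0 < c) :
    |quadGaussianDeriv c (1/2) - quadGaussianDeriv c (-(1/2))| ≤ 16 := by
  have hval : quadGaussianDeriv c (1/2) - quadGaussianDeriv c (-(1/2))
      = 8 * (c / 4 - (c / 4) ^ 2) * exp (-(c / 4)) := by
    simp only [quadGaussianDeriv]; ring_nf
  have hexp := quadratic_le_exp_of_nonneg (by positivity : 0 ≤ c / 4)
  have hpoly : |c / 4 - (c / 4) ^ 2| ≤ 2 * (1 + c / 4 + (c / 4) ^ 2 / 2) :=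
    abs_le.2 ⟨by nlinarith, by nlinarith⟩
  rw [hval, abs_mul, abs_mul, abs_of_pos (exp_pos _), exp_neg,
    abs_of_pos (by norm_num : (0:ℝ) < 8), ← div_eq_mul_inv, div_le_iff₀ (exp_pos _)]
  nlinarith

theorem norm_fourierCoeff1_quadGaussian_le {c : ℝ} (hc : 0 < c) (k : ℤ) :
    ‖fourierCoeff1 (quadGaussian c) k‖ ≤ √(π / c) / 2 := by
  have hnorm (x : ℝ) : ‖(quadGaussian c x : ℂ)‖ = quadGaussian c x := by
    rw [Complex.norm_real, Real.norm_of_nonneg (by unfold quadGaussian; positivity)]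
  rw [fourierCoeff1_eq_fourierCoeffOn]
  refine (norm_fourierCoeffOn_le _ _ k).trans ?_
  simp only [hnorm]
  norm_num
  exact intervalIntegral_quadGaussian_le hc

theorem norm_fourierCoeff1_quadGaussian_le_div_sq {c : ℝ} (hc : 0 < c) {k : ℤ} (hk : k ≠ 0) :
    ‖fourierCoeff1 (quadGaussian c) k‖ ≤ (16 + 10 * c * √(π / c)) / (2 * π * |k|) ^ 2 := by
  rw [fourierCoeff1_eq_fourierCoeffOn]
  refine (norm_fourierCoeffOn_le_of_hasDerivAt_of_hasDerivAt _ hk (by norm_num [quadGaussian])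
    (fun x _ ↦ (hasDerivAt_quadGaussian c x).ofReal_comp)
    (fun x _ ↦ (hasDerivAt_quadGaussianDeriv c x).ofReal_comp)
    ((by unfold quadGaussianDeriv2; fun_prop :
      Continuous fun x ↦ (quadGaussianDeriv2 c x : ℂ)).intervalIntegrable _ _)).trans ?_
  simp only [← Complex.ofReal_sub, Complex.norm_real, Real.norm_eq_abs]
  norm_num only [one_mul]
  gcongr
  · exact abs_quadGaussianDeriv_sub_le hc
  · exact intervalIntegral_abs_quadGaussianDeriv2_le hc

theorem sum_Icc_le_of_le_of_le_div_sq {a : ℕ → ℝ} {A B : ℝ} (ha : ∀ k, 0 ≤ a k)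
    (hA : ∀ k, a k ≤ A) (hB : ∀ k, 1 ≤ k → a k ≤ B / k ^ 2) (K N : ℕ) :
    ∑ k ∈ Icc 1 N, a k ≤ K * A + B * (2 / (K + 1)) := by
  have hB0 : 0 ≤ B := by simpa using (ha 1).trans (hB 1 le_rfl)
  have hsub : Icc 1 N ⊆ Icc 1 K ∪ Ioo K (N + 1) := by
    intro k; simp only [mem_union, mem_Icc, mem_Ioo]; omega
  have hdisj : Disjoint (Icc 1 K) (Ioo K (N + 1)) := by
    rw [disjoint_left]; intro k; simp only [mem_Icc, mem_Ioo]; omega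
  have hhead : ∑ k ∈ Icc 1 K, a k ≤ K * A := by
    simpa using sum_le_card_nsmul (Icc 1 K) a A fun k _ ↦ hA k
  have htail : ∑ k ∈ Ioo K (N + 1), a k ≤ B * (2 / (K + 1)) := by
    calc ∑ k ∈ Ioo K (N + 1), a k ≤ ∑ k ∈ Ioo K (N + 1), B * ((k : ℝ) ^ 2)⁻¹ :=
          sum_le_sum fun k hk ↦
            (hB k (by simp only [mem_Ioo] at hk; omega)).trans_eq (div_eq_mul_inv _ _)
      _ ≤ B * (2 / (K + 1)) := by rw [← mul_sum]; gcongr; exact sum_Ioo_inv_sq_le K (N + 1)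
  calc ∑ k ∈ Icc 1 N, a k ≤ ∑ k ∈ Icc 1 K ∪ Ioo K (N + 1), a k :=
        sum_le_sum_of_subset_of_nonneg hsub fun k _ _ ↦ ha k
    _ ≤ K * A + B * (2 / (K + 1)) := by rw [sum_union hdisj]; exact add_le_add hhead htail

theorem sum_norm_fourierCoeff1_quadGaussian_lt {c : ℝ} (hc : 0 < c) (N : ℕ) :
    ∑ k ∈ Icc 1 N, ‖fourierCoeff1 (quadGaussian c) k‖ < 7 / 2 := by
  set s := √(π / c)
  have hs : 0 < s := sqrt_pos.2 (div_pos pi_pos hc)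
  have hcs : c * s = π / s := by
    rw [eq_div_iff hs.ne', mul_assoc, ← sq, sq_sqrt (div_pos pi_pos hc).le,
      mul_div_cancel₀ _ hc.ne']
  set K := ⌊1 / s⌋₊
  have hKs_le : K * s ≤ 1 := (le_div_iff₀ hs).1 (Nat.floor_le (by positivity))
  have hKs_gt : 1 < (K + 1) * s := (div_lt_iff₀ hs).1 (Nat.lt_floor_add_one _)
  have hB (k : ℕ) (hk : 1 ≤ k) :
      ‖fourierCoeff1 (quadGaussian c) k‖ ≤ (16 + 10 * c * s) / (4 * π ^ 2) / k ^ 2 := by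
    refine (norm_fourierCoeff1_quadGaussian_le_div_sq hc (k := k) (by omega)).trans_eq ?_
    rw [Nat.abs_cast]
    push_cast
    ring
  refine (sum_Icc_le_of_le_of_le_div_sq (fun _ ↦ norm_nonneg _)
    (fun k ↦ norm_fourierCoeff1_quadGaussian_le hc k) hB K N).trans_lt ?_
  have hsplit : (16 + 10 * c * s) / (4 * π ^ 2) * (2 / (K + 1))
      = 8 / π ^ 2 / (K + 1) + 5 / π / ((K + 1) * s) := by
    rw [mul_assoc, hcs]; field_simp; ring
  have hπ := pi_gt_three
  have hfirst : 8 / π ^ 2 / (K + 1) < 8 / 9 := by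
    calc 8 / π ^ 2 / (K + 1) ≤ 8 / π ^ 2 :=
          div_le_self (by positivity) (by linarith [K.cast_nonneg (α := ℝ)])
      _ < 8 / 9 := by gcongr; nlinarith
  have hsecond : 5 / π / ((K + 1) * s) < 5 / 3 := by
    calc 5 / π / ((K + 1) * s) ≤ 5 / π := div_le_self (by positivity) hKs_gt.le
      _ < 5 / 3 := by gcongr
  rw [hsplit]
  linarith

theorem derGauss_fourier_coeff_partial_sum_general (ℓ : ℝ) (hℓ : 0 < ℓ) (m : ℕ) :
    (∑ k ∈ Finset.Icc 1 (m / 2),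
        ‖fourierCoeff1 (fun x => (x ^ 2 / (2 * ℓ ^ 2)) * Real.exp (-x ^ 2 / (2 * ℓ ^ 2)))
          (k : ℤ)‖) < 7/2 := by
  have hg : (fun x => (x ^ 2 / (2 * ℓ ^ 2)) * Real.exp (-x ^ 2 / (2 * ℓ ^ 2)))
      = quadGaussian (2 * ℓ ^ 2)⁻¹ := by
    funext x; simp only [quadGaussian]; ring_nf
  rw [hg]
  exact sum_norm_fourierCoeff1_quadGaussian_lt (by positivity) (m / 2)

/-- For the derivative Gaussian `g(x) = (x²/(2ℓ²)) e^{−x²/(2ℓ²)}` and even `m ≥ 2`,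
`Σ_{k=1}^{m/2} |c_k(g)| < 7/2`. -/
theorem derGauss_fourier_coeff_partial_sum (ℓ : ℝ) (hℓ : 0 < ℓ) (m : ℕ) (hm : Even m)
    (hm2 : 2 ≤ m) :
    (∑ k ∈ Finset.Icc 1 (m / 2),
        ‖fourierCoeff1 (fun x => (x ^ 2 / (2 * ℓ ^ 2)) * Real.exp (-x ^ 2 / (2 * ℓ ^ 2)))
          (k : ℤ)‖) < 7/2 :=
  derGauss_fourier_coeff_partial_sum_general ℓ hℓ m
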